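/- arXiv:2604.26286 — 3 statements merged into one kernel-verified Lean document; each statement's English description precedes it below -/
import Mathlib

section
/- For every real β > 1 and every t in the interval [(β-1)/(β+1), 1], one has t^β (1-t) ≥ e^{-1} (1-t) ((β+1) t - (β-1)). -/
open Real

lemma Real.exp_neg_one_le_div_add_one_rpow {x : ℝ} (hx : 0 < x) :
    exp (-1) ≤ (x / (x + 1)) ^ x := by
  have hbase : exp (-x⁻¹) ≤ x / (x + 1) := by
    rw [exp_neg, show x / (x + 1) = (1 + x⁻¹)⁻¹ by field_simp]
    exact inv_anti₀ (by positivity) (by linarith [add_one_le_exp x⁻¹])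
  calc exp (-1) = exp (-x⁻¹) ^ x := by rw [← exp_mul, neg_mul, inv_mul_cancel₀ hx.ne']
    _ ≤ (x / (x + 1)) ^ x := rpow_le_rpow (exp_pos _).le hbase hx.le

/-- Bernoulli's inequality for `(t / c) ^ β` with `c = β / (β + 1)`, times `c ^ β ≥ e⁻¹`. -/
lemma Real.exp_neg_one_mul_le_rpow {β t : ℝ} (hβ : 1 ≤ β) (ht : 0 ≤ t) :
    exp (-1) * ((β + 1) * t - (β - 1)) ≤ t ^ β := by
  rcases le_or_gt ((β + 1) * t - (β - 1)) 0 with hneg | hpos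
  · exact (mul_nonpos_of_nonneg_of_nonpos (exp_pos _).le hneg).trans (rpow_nonneg ht _)
  set c := β / (β + 1)
  have hc : 0 < c := by positivity
  have hbernoulli : (β + 1) * t - (β - 1) ≤ (t / c) ^ β := by
    have hs : -1 ≤ t / c - 1 := by linarith [div_nonneg ht hc.le]
    have h := one_add_mul_self_le_rpow_one_add hs hβ
    rw [add_sub_cancel] at h
    have hlin : 1 + β * (t / c - 1) = (β + 1) * t - (β - 1) := by
      simp only [c]; field_simp; ring
    linarith
  calc exp (-1) * ((β + 1) * t - (β - 1)) ≤ c ^ β * (t / c) ^ β :=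
        mul_le_mul (exp_neg_one_le_div_add_one_rpow (by linarith)) hbernoulli hpos.le
          (rpow_nonneg hc.le _)
    _ = t ^ β := by
        rw [← mul_rpow hc.le (by positivity), mul_div_cancel₀ _ hc.ne']

theorem stmt_0 (β t : ℝ) (hβ : 1 < β)
    (ht : t ∈ Set.Icc ((β - 1) / (β + 1)) 1) :
    t ^ β * (1 - t) ≥ Real.exp (-1) * (1 - t) * ((β + 1) * t - (β - 1)) := by
  have ht0 : 0 ≤ t := (div_nonneg (by linarith) (by linarith)).trans ht.1
  calc Real.exp (-1) * (1 - t) * ((β + 1) * t - (β - 1))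
      = Real.exp (-1) * ((β + 1) * t - (β - 1)) * (1 - t) := by ring
    _ ≤ t ^ β * (1 - t) :=
        mul_le_mul_of_nonneg_right (exp_neg_one_mul_le_rpow hβ.le ht0) (by linarith [ht.2])
end

section
/- Define G(t) = t - (2/e)(e^{-2t}(t+1) + t - 1). Then for all t ∈ (0,1), e^{G(t)} + G(t)(t+1) < 2(t+1). -/
/-!
Since `e^{-2t}` is convex, it lies above its tangent line `e^{-2}(3 - 2t)` at `t = 1`; substituting
this into `G` and rounding `2/e` up and `2/e³` down gives a rational quadratic `majorantG ≥ G` on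
`[0, 1]`. As `x ↦ e^x + x(t + 1)` is increasing, it suffices to prove the inequality for
`majorantG t`, which takes values in `[0.43, 0.81]`; there the cubic Taylor bound for `e^x` turns it
into a polynomial inequality. Its margin is smallest, about `0.01`, at `t = 0`.
-/

noncomputable def G (t : ℝ) : ℝ :=
  t - (2 / Real.exp 1) * (Real.exp (-2 * t) * (t + 1) + t - 1)

open Real

theorem exp_mul_sub_add_one_le_exp (a x : ℝ) : exp a * (x - a + 1) ≤ exp x :=
  calc exp a * (x - a + 1) ≤ exp a * exp (x - a) := by gcongr; exact add_one_le_exp _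
    _ = exp x := by rw [← exp_add, add_sub_cancel]

theorem exp_le_cubic {x : ℝ} (hx0 : 0 ≤ x) (hx1 : x ≤ 1) :
    exp x ≤ 1 + x + x ^ 2 / 2 + 2 / 9 * x ^ 3 := by
  have h := exp_bound' hx0 hx1 (n := 3) (by norm_num)
  norm_num [Finset.sum_range_succ, Nat.factorial] at h
  linarith

noncomputable def majorantG (t : ℝ) : ℝ :=
  t + 7358 / 10000 * (1 - t) - 995 / 10000 * ((3 - 2 * t) * (t + 1))

theorem G_le_majorantG {t : ℝ} (ht0 : 0 ≤ t) (ht1 : t ≤ 1) : G t ≤ majorantG t := by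
  have h_tangent : exp (-2) * (3 - 2 * t) ≤ exp (-2 * t) := by
    convert exp_mul_sub_add_one_le_exp (-2) (-2 * t) using 2; ring
  have he_lo : 2.7182818283 < exp 1 := exp_one_gt_d9
  have he_hi : exp 1 < 2.7182818286 := exp_one_lt_d9
  have h_two_div_e : 2 / exp 1 ≤ 7358 / 10000 := by
    rw [div_le_iff₀ (exp_pos 1)]; linarith
  have h_two_div_e_cube : 995 / 10000 ≤ 2 / exp 1 * exp (-2) := by
    have h_eq : 2 / exp 1 * exp (-2) = 2 / exp 1 ^ 3 := by
      rw [exp_neg, show (2 : ℝ) = 1 + 1 by norm_num, exp_add]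
      field_simp
    rw [h_eq, le_div_iff₀ (by positivity)]
    nlinarith [pow_le_pow_left₀ (exp_pos 1).le he_hi.le 3]
  have hq : 0 ≤ (3 - 2 * t) * (t + 1) := by nlinarith
  calc G t = t + 2 / exp 1 * (1 - t) - 2 / exp 1 * (exp (-2 * t) * (t + 1)) := by
        rw [G]; ring
    _ ≤ t + 2 / exp 1 * (1 - t) - 2 / exp 1 * (exp (-2) * (3 - 2 * t) * (t + 1)) := by
        gcongr
    _ = t + 2 / exp 1 * (1 - t) - 2 / exp 1 * exp (-2) * ((3 - 2 * t) * (t + 1)) := by ring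
    _ ≤ majorantG t := by
        rw [majorantG]
        gcongr

theorem exp_majorantG_add_mul_lt {t : ℝ} (ht0 : 0 ≤ t) (ht1 : t ≤ 1) :
    exp (majorantG t) + majorantG t * (t + 1) < 2 * (t + 1) := by
  set x := majorantG t with hx
  have hx_lo : 43 / 100 ≤ x := by rw [hx, majorantG]; nlinarith
  have hx_hi : x ≤ 81 / 100 := by rw [hx, majorantG]; nlinarith
  -- the chord of the convex quadratic `majorantG` on `[0, 1]`; lets `nlinarith` eliminate `t`
  have hx_chord :
      x ≤ t * (1 - 7358 / 10000 + 995 / 10000) + 7358 / 10000 - 3 * 995 / 10000 := by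
    rw [hx, majorantG]; nlinarith
  have h_exp := exp_le_cubic (by linarith) (by linarith : x ≤ 1)
  have h_lo := sub_nonneg.2 hx_lo
  have h_hi := sub_nonneg.2 hx_hi
  nlinarith [mul_nonneg h_lo h_hi, mul_nonneg (mul_nonneg h_lo h_hi) h_lo,
    pow_nonneg h_lo 2, pow_nonneg h_lo 3]

theorem stmt_4 (t : ℝ) (ht : t ∈ Set.Ioo (0 : ℝ) 1) :
    Real.exp (G t) + G t * (t + 1) < 2 * (t + 1) := by
  obtain ⟨ht0, ht1⟩ := ht
  have hG := G_le_majorantG ht0.le ht1.le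
  calc exp (G t) + G t * (t + 1) ≤ exp (majorantG t) + majorantG t * (t + 1) := by
        gcongr
    _ < 2 * (t + 1) := exp_majorantG_add_mul_lt ht0.le ht1.le
end

section
/- Let n ≥ 3 be a natural number and 2 ≤ p < n real, and let λ be a real number with 0 < λ ≤ (1/n)(1 - I) for some I ∈ (0,1) satisfying (1 - I)^p < ((n-1) I + 1)^{p-1} / κ^{p-1}, where κ = n^{-1/(p-1)} (p-1). Then λ (n-1) + λ^{p/(p-1)} (p-1) < 1. -/
/-! With `A = 1 - I`, `B = (n - 1) I + 1` and `q = p / (p - 1)`, taking `(p - 1)`-th roots in the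
hypothesis on `I` gives `κ A^q < B`. The left-hand side is increasing in `λ`, and at `λ = A / n`
it equals `(A (n - 1) + κ A^q) / n < (A (n - 1) + B) / n = 1`. -/

open Real

lemma rpow_div_sub_one_lt_of_rpow_lt {x y p : ℝ} (hx : 0 ≤ x) (hy : 0 ≤ y) (hp : 1 < p)
    (h : x ^ p < y ^ (p - 1)) : x ^ (p / (p - 1)) < y := by
  have hp1 : 0 < p - 1 := by linarith
  rwa [← rpow_lt_rpow_iff (rpow_nonneg hx _) hy hp1, ← rpow_mul hx, div_mul_cancel₀ _ hp1.ne']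

lemma div_rpow_div_sub_one {a n p : ℝ} (ha : 0 ≤ a) (hn : 0 < n) (hp : 1 < p) :
    (a / n) ^ (p / (p - 1)) = n ^ (-(1 / (p - 1))) * a ^ (p / (p - 1)) / n := by
  have hp1 : p - 1 ≠ 0 := by linarith
  have hq : p / (p - 1) = 1 + 1 / (p - 1) := by field_simp; ring
  rw [div_rpow ha hn.le, hq, rpow_add hn, rpow_one, rpow_neg hn.le]
  field_simp

theorem stmt_9_general (n : ℕ) (hn : 3 ≤ n) (p lam I κ : ℝ)
    (hp2 : 2 ≤ p)
    (hκ : κ = (n : ℝ) ^ (-(1 / (p - 1))) * (p - 1))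
    (hI0 : 0 < I) (hI1 : I < 1)
    (hlam0 : 0 < lam) (hlam : lam ≤ (1 / n) * (1 - I))
    (hkey : (1 - I) ^ p < ((n - 1) * I + 1) ^ (p - 1) / κ ^ (p - 1)) :
    lam * ((n : ℝ) - 1) + lam ^ (p / (p - 1)) * (p - 1) < 1 := by
  have hn1 : (1 : ℝ) ≤ n := by exact_mod_cast (by omega : 1 ≤ n)
  have hA : 0 ≤ 1 - I := by linarith
  have hB : 0 ≤ (n - 1) * I + 1 := by nlinarith
  have hp1 : 0 < p - 1 := by linarith
  have hκ0 : 0 < κ := by rw [hκ]; positivity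
  have hroot : κ * (1 - I) ^ (p / (p - 1)) < (n - 1) * I + 1 := by
    rw [← div_rpow hB hκ0.le] at hkey
    have := rpow_div_sub_one_lt_of_rpow_lt hA (div_nonneg hB hκ0.le) (by linarith) hkey
    rwa [lt_div_iff₀ hκ0, mul_comm] at this
  calc lam * ((n : ℝ) - 1) + lam ^ (p / (p - 1)) * (p - 1)
      ≤ (1 - I) / n * ((n : ℝ) - 1) + ((1 - I) / n) ^ (p / (p - 1)) * (p - 1) := by
        rw [one_div_mul_eq_div] at hlam
        gcongr
    _ = ((1 - I) * ((n : ℝ) - 1) + κ * (1 - I) ^ (p / (p - 1))) / n := by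
        rw [div_rpow_div_sub_one hA (by linarith) (by linarith), hκ]
        ring
    _ < ((1 - I) * ((n : ℝ) - 1) + ((n - 1) * I + 1)) / n := by gcongr
    _ = 1 := by field_simp; ring

theorem stmt_9 (n : ℕ) (hn : 3 ≤ n) (p lam I κ : ℝ)
    (hp2 : 2 ≤ p) (hpn : p < n)
    (hκ : κ = (n : ℝ) ^ (-(1 / (p - 1))) * (p - 1))
    (hI0 : 0 < I) (hI1 : I < 1)
    (hlam0 : 0 < lam) (hlam : lam ≤ (1 / n) * (1 - I))
    (hkey : (1 - I) ^ p < ((n - 1) * I + 1) ^ (p - 1) / κ ^ (p - 1)) :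
    lam * ((n : ℝ) - 1) + lam ^ (p / (p - 1)) * (p - 1) < 1 :=
  stmt_9_general n hn p lam I κ hp2 hκ hI0 hI1 hlam0 hlam hkey
end
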